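/- Let k be an odd positive integer and X ⊆ S¹ a subset with 2k+2 points such that t_b(X) < t_d(X). Then t_d(X) ≥ (k+1)(π − t_b(X)). -/

import Mathlib

/-- The largest distance from `x` to any point of `X`. -/
noncomputable def ptTd (X : Type*) [MetricSpace X] (x : X) : ℝ :=
  sSup (Set.range fun y => dist x y)

/-- The second largest distance (counted with multiplicity over points) from `x`
to points of `X`. -/
noncomputable def ptTb (X : Type*) [MetricSpace X] (x : X) : ℝ :=
  sSup {r : ℝ | ∃ y z : X, y ≠ z ∧ r = min (dist x y) (dist x z)}

/-- `t_b(X) = max_{x ∈ X} t_b(x)`. -/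
noncomputable def tbX (X : Type*) [MetricSpace X] : ℝ :=
  sSup (Set.range (ptTb X))

/-- `t_d(X) = min_{x ∈ X} t_d(x)`. -/
noncomputable def tdX (X : Type*) [MetricSpace X] : ℝ :=
  sInf (Set.range (ptTd X))

/-!
Since all second-largest distances are at most `t_b < t_d`, every point `x` has exactly one point
`F x` at distance more than `t_b`, and `F` is a fixed-point-free involution. No pair `{z, F z}`
lies inside the open arc from `x` to `F x`, so `F` swaps this arc with the complementary one and
each of them contains exactly `k` points. Along such an arc, let `a₀` be the last point passed and
`a₁ < a₂` the next two; the partner `b` of `a₁` has `b - a₁ ∈ (t_b, 2π - t_b)` while `b - a₀` and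
`b - a₂` lie outside this interval, so `a₂ - a₀ ≥ 2π - 2 t_b`. An arc with `k = 2j + 1` points
therefore has length at least `(j + 1)(2π - 2 t_b) = (k + 1)(π - t_b)`. Both arcs between `x` and
`F x` are that long, hence so is `d(x, F x)`; now take `x` realizing `t_d`.
-/

open Real Finset

section FarthestPoints

variable {X : Type*} [MetricSpace X]

def IsFarPairing (β : ℝ) (F : X → X) : Prop :=
  ∀ x y, β < dist x y ↔ y = F x

lemma ptTb_nonneg (x : X) : 0 ≤ ptTb X x :=
  Real.sSup_nonneg <| by rintro _ ⟨y, z, -, rfl⟩; positivity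

lemma tbX_nonneg : 0 ≤ tbX X :=
  Real.sSup_nonneg <| by rintro _ ⟨x, rfl⟩; exact ptTb_nonneg x

variable [Finite X]

lemma min_dist_le_tbX {x y z : X} (hyz : y ≠ z) : min (dist x y) (dist x z) ≤ tbX X :=
  calc min (dist x y) (dist x z) ≤ ptTb X x := by
        refine le_csSup ((Set.finite_range fun q : X × X => min (dist x q.1) (dist x q.2)).subset
          ?_).bddAbove ⟨y, z, hyz, rfl⟩
        rintro _ ⟨y, z, -, rfl⟩
        exact ⟨(y, z), rfl⟩
    _ ≤ tbX X := le_csSup (Set.finite_range _).bddAbove ⟨x, rfl⟩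

lemma tdX_le_ptTd (x : X) : tdX X ≤ ptTd X x :=
  csInf_le (Set.finite_range _).bddBelow ⟨x, rfl⟩

lemma exists_dist_eq_ptTd (x : X) : ∃ y, dist x y = ptTd X x :=
  (Set.range_nonempty_iff_nonempty.2 ⟨x⟩).csSup_mem (Set.finite_range _)

lemma exists_ptTd_eq_tdX [Nonempty X] : ∃ x, ptTd X x = tdX X :=
  Set.Nonempty.csInf_mem (Set.range_nonempty _) (Set.finite_range _)

lemma exists_isFarPairing_tbX (h : tbX X < tdX X) : ∃ F : X → X, IsFarPairing (tbX X) F := by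
  have hfar (x : X) : ∃ y, tbX X < dist x y := by
    obtain ⟨y, hy⟩ := exists_dist_eq_ptTd x
    exact ⟨y, hy ▸ h.trans_le (tdX_le_ptTd x)⟩
  choose F hF using hfar
  refine ⟨F, fun x y => ⟨fun hy => ?_, fun hy => hy ▸ hF x⟩⟩
  by_contra hne
  exact (min_dist_le_tbX hne).not_gt (lt_min hy (hF x))

end FarthestPoints

namespace IsFarPairing

variable {X : Type*} [MetricSpace X] {β : ℝ} {F : X → X}

lemma lt_dist (hF : IsFarPairing β F) (x : X) : β < dist x (F x) := (hF x (F x)).2 rfl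

lemma dist_le (hF : IsFarPairing β F) {x y : X} (h : y ≠ F x) : dist x y ≤ β :=
  not_lt.1 fun h' => h ((hF x y).1 h')

lemma apply_apply (hF : IsFarPairing β F) (x : X) : F (F x) = x :=
  ((hF (F x) x).1 (dist_comm x (F x) ▸ hF.lt_dist x)).symm

lemma injective (hF : IsFarPairing β F) : Function.Injective F :=
  Function.LeftInverse.injective hF.apply_apply

lemma apply_ne (hF : IsFarPairing β F) (hβ : 0 ≤ β) (x : X) : F x ≠ x := fun h => by
  have := hF.lt_dist x
  rw [h, dist_self] at this
  linarith

end IsFarPairing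

lemma sub_le_sub_of_partner {lo hi x a c b : ℝ} (hxa : x < a) (hac : a < c)
    (ha : b - a ∈ Set.Ioo lo hi) (hx : b - x ∉ Set.Ioo lo hi) (hc : b - c ∉ Set.Ioo lo hi) :
    hi - lo ≤ c - x := by
  have hc' : b - c ≤ lo := not_lt.1 fun h => hc ⟨h, by linarith [ha.2]⟩
  have hx' : hi ≤ b - x := not_lt.1 fun h => hx ⟨by linarith [ha.1], h⟩
  linarith

theorem add_one_mul_sub_le_of_unique_partner {lo hi : ℝ} (j : ℕ) {T : Finset ℝ} {x y : ℝ}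
    (hcard : #T = 2 * j + 1) (hT : ∀ a ∈ T, a ∈ Set.Ioo x y)
    (hpartner : ∀ a ∈ T, ∃ b, ∀ c ∈ insert x (insert y T), b - c ∈ Set.Ioo lo hi ↔ c = a) :
    (j + 1) * (hi - lo) ≤ y - x := by
  induction j generalizing T x with
  | zero =>
    obtain ⟨a, rfl⟩ := card_eq_one.1 hcard
    obtain ⟨hxa, hay⟩ := hT a (mem_singleton_self a)
    obtain ⟨b, hb⟩ := hpartner a (mem_singleton_self a)
    have := sub_le_sub_of_partner hxa hay ((hb a (by simp)).2 rfl)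
      (fun h => hxa.ne ((hb x (by simp)).1 h)) (fun h => hay.ne' ((hb y (by simp)).1 h))
    simpa using this
  | succ j ih =>
    have hT₀ : T.Nonempty := card_pos.1 (by omega)
    set a₁ := T.min' hT₀
    have ha₁ : a₁ ∈ T := T.min'_mem hT₀
    have hT₁ : (T.erase a₁).Nonempty := card_pos.1 (by rw [card_erase_of_mem ha₁]; omega)
    set a₂ := (T.erase a₁).min' hT₁
    have ha₂ : a₂ ∈ T.erase a₁ := (T.erase a₁).min'_mem hT₁
    have ha₁₂ : a₁ < a₂ := (T.min'_le a₂ (mem_of_mem_erase ha₂)).lt_of_ne (ne_of_mem_erase ha₂).symm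
    set T₂ := (T.erase a₁).erase a₂
    have hT₂ : T₂ ⊆ T := (erase_subset _ _).trans (erase_subset _ _)
    have hgap : hi - lo ≤ a₂ - x := by
      obtain ⟨b, hb⟩ := hpartner a₁ ha₁
      exact sub_le_sub_of_partner (hT a₁ ha₁).1 ha₁₂ ((hb a₁ (by simp [ha₁])).2 rfl)
        (fun h => (hT a₁ ha₁).1.ne ((hb x (by simp)).1 h))
        (fun h => ha₁₂.ne' ((hb a₂ (by simp [mem_of_mem_erase ha₂])).1 h))
    have hrest : (j + 1) * (hi - lo) ≤ y - a₂ := by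
      refine ih (by rw [card_erase_of_mem ha₂, card_erase_of_mem ha₁, hcard]; omega)
        (fun a ha => ⟨((T.erase a₁).min'_le a (mem_of_mem_erase ha)).lt_of_ne
          (ne_of_mem_erase ha).symm, (hT a (hT₂ ha)).2⟩) fun a ha => ?_
      obtain ⟨b, hb⟩ := hpartner a (hT₂ ha)
      exact ⟨b, fun c hc => hb c (insert_subset (by simp [mem_of_mem_erase ha₂])
        ((insert_subset_insert y hT₂).trans (subset_insert x _)) hc)⟩
    push_cast
    linarith

namespace AddCircle

variable {p : ℝ}

lemma norm_coe_eq_min {δ : ℝ} (h0 : 0 ≤ δ) (hδ : δ ≤ p) :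
    ‖(δ : AddCircle p)‖ = min δ (p - δ) := by
  rcases eq_or_ne p 0 with rfl | hp
  · obtain rfl : δ = 0 := le_antisymm hδ h0
    simp
  have hp0 : |p| = p := abs_of_nonneg (h0.trans hδ)
  rcases le_total δ (p / 2) with hle | hge
  · rw [(norm_coe_eq_abs_iff p hp).2 (by rw [abs_of_nonneg h0, hp0]; exact hle),
      abs_of_nonneg h0, min_eq_left (by linarith)]
  · conv_lhs => rw [← sub_add_cancel δ p, coe_add_period]
    rw [(norm_coe_eq_abs_iff p hp).2 (by
        rw [abs_of_nonpos (by linarith), hp0]; linarith),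
      abs_of_nonpos (by linarith), min_eq_right (by linarith), neg_sub]

variable [Fact (0 < p)]

/-- The length of the positively oriented arc from `x` to `y`. -/
noncomputable def arc (x y : AddCircle p) : ℝ :=
  equivIco p 0 (y - x)

lemma arc_mem_Ico (x y : AddCircle p) : arc x y ∈ Set.Ico 0 p := by
  simpa [arc] using (equivIco p 0 (y - x)).2

lemma coe_arc (x y : AddCircle p) : (arc x y : AddCircle p) = y - x :=
  coe_equivIco

lemma arc_eq_of_coe {x y : AddCircle p} {t : ℝ} (ht : t ∈ Set.Ico 0 p)
    (h : (t : AddCircle p) = y - x) : arc x y = t := by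
  rw [arc, ← h, equivIco_coe_of_mem (by simpa using ht)]

lemma arc_injective (x : AddCircle p) : Function.Injective (arc x) := fun y z h =>
  sub_left_inj.1 ((coe_arc x y).symm.trans (h ▸ coe_arc x z))

@[simp]
lemma arc_self (x : AddCircle p) : arc x x = 0 :=
  arc_eq_of_coe ⟨le_rfl, Fact.out⟩ (by simp)

lemma arc_pos {x y : AddCircle p} (h : y ≠ x) : 0 < arc x y :=
  (arc_mem_Ico x y).1.lt_of_ne fun h0 => h (arc_injective x (h0.symm.trans (arc_self x).symm))

lemma arc_eq_sub {x y z : AddCircle p} (h : arc x y ≤ arc x z) :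
    arc y z = arc x z - arc x y :=
  arc_eq_of_coe ⟨by linarith, by linarith [(arc_mem_Ico x z).2, (arc_mem_Ico x y).1]⟩
    (by rw [coe_sub, coe_arc, coe_arc]; abel)

lemma arc_eq_sub_add {x y z : AddCircle p} (h : arc x z < arc x y) :
    arc y z = arc x z - arc x y + p :=
  arc_eq_of_coe ⟨by linarith [(arc_mem_Ico x y).2, (arc_mem_Ico x z).1], by linarith⟩
    (by rw [coe_add, coe_period, add_zero, coe_sub, coe_arc, coe_arc]; abel)

lemma arc_comm {x y : AddCircle p} (h : y ≠ x) : arc y x = p - arc x y := by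
  rw [arc_eq_sub_add (x := x) (by simpa using arc_pos h), arc_self]
  ring

lemma dist_eq_min_arc (x y : AddCircle p) : dist x y = min (arc x y) (p - arc x y) := by
  rw [dist_comm, dist_eq_norm, ← coe_arc]
  exact norm_coe_eq_min (arc_mem_Ico x y).1 (arc_mem_Ico x y).2.le

lemma lt_dist_iff_mem_Ioo {x y z : AddCircle p} {β : ℝ} (h : arc x y ≤ arc x z) :
    β < dist y z ↔ arc x z - arc x y ∈ Set.Ioo β (p - β) := by
  rw [dist_eq_min_arc, arc_eq_sub h, lt_min_iff, Set.mem_Ioo]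
  constructor <;> rintro ⟨h₁, h₂⟩ <;> constructor <;> linarith

def openArc (x y : AddCircle p) : Set (AddCircle p) :=
  {z | 0 < arc x z ∧ arc x z < arc x y}

lemma mem_openArc_swap {x y z : AddCircle p} (hxy : y ≠ x) (hzx : z ≠ x) (hzy : z ≠ y) :
    z ∈ openArc y x ↔ z ∉ openArc x y := by
  simp only [openArc, Set.mem_ofPred_eq, arc_comm hxy, not_and, not_lt]
  rcases ((arc_injective x).ne hzy).lt_or_gt with hlt | hgt
  · rw [arc_eq_sub_add hlt]
    exact iff_of_false (fun h => by linarith [h.2, (arc_mem_Ico x z).1]) fun h => by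
      linarith [h (arc_pos hzx)]
  · rw [arc_eq_sub hgt.le]
    exact iff_of_true ⟨by linarith, by linarith [(arc_mem_Ico x z).2]⟩ fun _ => hgt.le

lemma ne_left_of_mem_openArc {x y z : AddCircle p} (h : z ∈ openArc x y) : z ≠ x := by
  rintro rfl
  simp [openArc] at h

lemma ne_right_of_mem_openArc {x y z : AddCircle p} (h : z ∈ openArc x y) : z ≠ y := by
  rintro rfl
  exact h.2.false

open Classical in
noncomputable def arcPoints (s : Finset (AddCircle p)) (x y : AddCircle p) : Finset s :=
  univ.filter fun z => (z : AddCircle p) ∈ openArc x y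

variable {s : Finset (AddCircle p)}

lemma mem_arcPoints {x y : AddCircle p} {z : s} :
    z ∈ arcPoints s x y ↔ (z : AddCircle p) ∈ openArc x y := by
  simp [arcPoints]

lemma card_arcPoints_add_card_arcPoints {x y : s} (hxy : y ≠ x) :
    #(arcPoints s x y) + #(arcPoints s y x) + 2 = #s := by
  classical
  have hxy' : (y : AddCircle p) ≠ x := Subtype.coe_injective.ne hxy
  set R : Finset s := (univ.erase x).erase y
  have h₁ : arcPoints s x y = R.filter fun z : s => (z : AddCircle p) ∈ openArc x y := by
    ext z
    simp only [mem_filter, mem_arcPoints, R, mem_erase, Finset.mem_univ, and_true]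
    refine ⟨fun hz => ⟨⟨?_, ?_⟩, hz⟩, And.right⟩
    · exact Subtype.coe_injective.ne_iff.1 (ne_right_of_mem_openArc hz)
    · exact Subtype.coe_injective.ne_iff.1 (ne_left_of_mem_openArc hz)
  have h₂ : arcPoints s y x = R.filter fun z : s => (z : AddCircle p) ∉ openArc x y := by
    ext z
    simp only [mem_filter, mem_arcPoints, R, mem_erase, Finset.mem_univ, and_true,
      ← Subtype.coe_injective.ne_iff]
    refine ⟨fun hz => ?_, fun ⟨⟨hzy, hzx⟩, hz⟩ => (mem_openArc_swap hxy' hzx hzy).2 hz⟩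
    have hzy := ne_left_of_mem_openArc hz
    have hzx := ne_right_of_mem_openArc hz
    exact ⟨⟨hzy, hzx⟩, (mem_openArc_swap hxy' hzx hzy).1 hz⟩
  have hR : #R = #s - 2 := by
    rw [card_erase_of_mem (by simpa using hxy), card_erase_of_mem (mem_univ x), card_univ,
      Fintype.card_coe]
    rfl
  have hs : 2 ≤ #s := by
    rw [← Fintype.card_coe]
    exact Fintype.one_lt_card_iff_nontrivial.2 ⟨x, y, hxy.symm⟩
  rw [h₁, h₂, card_filter_add_card_filter_not, hR]
  omega

end AddCircle

namespace IsFarPairing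

open AddCircle

variable {p : ℝ} [Fact (0 < p)] {s : Finset (AddCircle p)} {β : ℝ} {F : s → s}

lemma apply_notMem_openArc (hF : IsFarPairing β F) (hβ : 0 ≤ β) {x z : s}
    (hz : z.1 ∈ openArc x (F x)) : (F z).1 ∉ openArc x (F x) := by
  intro hFz
  wlog h : arc x.1 z < arc x.1 (F z) generalizing z
  · refine this hFz (by rwa [hF.apply_apply]) ?_
    rw [hF.apply_apply]
    exact (not_lt.1 h).lt_of_ne ((arc_injective _).ne
      (Subtype.coe_injective.ne (hF.apply_ne hβ z)))
  have hzx : z ≠ x := Subtype.coe_injective.ne_iff.1 (ne_left_of_mem_openArc hz)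
  have hpair : β < arc x.1 (F z) - arc x.1 z :=
    ((lt_dist_iff_mem_Ioo h.le).1 (hF.lt_dist z)).1
  have hnear : dist x (F z) ≤ β := hF.dist_le (hF.injective.ne hzx)
  have hfar : β < dist x (F x) := hF.lt_dist x
  -- `F z` is within `β` of `x`. On the side after `x`, `z` (which precedes `F z`) would then be
  -- within `β` of `F z`; on the side before `x`, so would `F x` (which follows `F z`) of `x`.
  rw [Subtype.dist_eq, dist_eq_min_arc, min_le_iff] at hnear
  rw [Subtype.dist_eq, dist_eq_min_arc, lt_min_iff] at hfar
  rcases hnear with hnear | hnear <;> linarith [hz.1, hFz.2]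

lemma arc_lt_arc_apply (hF : IsFarPairing β F) (hβ : 0 ≤ β) {x z : s}
    (hz : z.1 ∈ openArc x (F x)) :
    arc x.1 (F x) < arc x.1 (F z) := by
  have hFzx : F z ≠ x := fun h => Subtype.coe_injective.ne_iff.1 (ne_right_of_mem_openArc hz)
    (by rw [← h, hF.apply_apply])
  have hFzFx : F z ≠ F x :=
    hF.injective.ne (Subtype.coe_injective.ne_iff.1 (ne_left_of_mem_openArc hz))
  refine lt_of_not_ge fun hle => hF.apply_notMem_openArc hβ hz
    ⟨arc_pos (Subtype.coe_injective.ne hFzx), hle.lt_of_ne ?_⟩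
  exact (arc_injective _).ne (Subtype.coe_injective.ne hFzFx)

lemma apply_mem_arcPoints (hF : IsFarPairing β F) (hβ : 0 ≤ β) {x z : s}
    (hz : z ∈ arcPoints s x (F x)) :
    F z ∈ arcPoints s (F x) x := by
  have hlt := hF.arc_lt_arc_apply hβ (mem_arcPoints.1 hz)
  rw [mem_arcPoints, openArc, Set.mem_ofPred_eq, arc_eq_sub hlt.le,
    arc_comm (Subtype.coe_injective.ne (hF.apply_ne hβ x))]
  exact ⟨sub_pos.2 hlt, by linarith [(arc_mem_Ico x.1 (F z)).2]⟩

lemma two_mul_card_arcPoints_add_two (hF : IsFarPairing β F) (hβ : 0 ≤ β) (x : s) :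
    2 * #(arcPoints s x (F x)) + 2 = #s := by
  have h₁ := card_le_card_of_injOn F (s := arcPoints s x (F x))
    (fun z hz => hF.apply_mem_arcPoints hβ hz) hF.injective.injOn
  have h₂ := card_le_card_of_injOn F (s := arcPoints s (F x) x) (fun z hz => by
    simpa only [hF.apply_apply, mem_coe] using hF.apply_mem_arcPoints hβ (x := F x)
      (by rwa [hF.apply_apply])) hF.injective.injOn
  have := card_arcPoints_add_card_arcPoints (hF.apply_ne hβ x)
  omega

lemma add_one_mul_le_arc (hF : IsFarPairing β F) (hβ : 0 ≤ β) {j : ℕ} (x : s)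
    (hj : #(arcPoints s x (F x)) = 2 * j + 1) :
    (j + 1) * (p - β - β) ≤ arc x.1 (F x) := by
  have harc_inj : Function.Injective fun z : s => arc x.1 z :=
    (arc_injective _).comp Subtype.coe_injective
  set T := (arcPoints s x (F x)).image fun z : s => arc x.1 z
  have hT : ∀ a ∈ T, a ∈ Set.Ioo 0 (arc x.1 (F x)) := fun a ha => by
    obtain ⟨z, hz, rfl⟩ := mem_image.1 ha
    exact mem_arcPoints.1 hz
  have hpartner : ∀ a ∈ T, ∃ b, ∀ c ∈ insert 0 (insert (arc x.1 (F x)) T),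
      b - c ∈ Set.Ioo β (p - β) ↔ c = a := fun a ha => by
    obtain ⟨z, hz, rfl⟩ := mem_image.1 ha
    refine ⟨arc x.1 (F z), fun c hc => ?_⟩
    obtain ⟨w, hw, rfl⟩ : ∃ w : s, arc x.1 w ≤ arc x.1 (F x) ∧ arc x.1 w = c := by
      simp only [mem_insert, T, mem_image] at hc
      rcases hc with rfl | rfl | ⟨w, hw, rfl⟩
      · exact ⟨x, by simpa using (arc_mem_Ico _ _).1, by simp⟩
      · exact ⟨F x, le_rfl, rfl⟩
      · exact ⟨w, (mem_arcPoints.1 hw).2.le, rfl⟩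
    rw [← lt_dist_iff_mem_Ioo (hw.trans (hF.arc_lt_arc_apply hβ (mem_arcPoints.1 hz)).le),
      ← Subtype.dist_eq, hF w (F z), hF.injective.eq_iff, harc_inj.eq_iff, eq_comm]
  simpa using add_one_mul_sub_le_of_unique_partner j
    (by rwa [card_image_of_injective _ harc_inj]) hT hpartner

end IsFarPairing

theorem tdX_ge_of_circle_odd_general (k : ℕ) (hk : Odd k)
    (s : Finset (AddCircle (2 * Real.pi))) (hcard : s.card = 2 * k + 2)
    (h : tbX ↥s < tdX ↥s) :
    ((k : ℝ) + 1) * (Real.pi - tbX ↥s) ≤ tdX ↥s := by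
  have : Fact (0 < 2 * π) := ⟨two_pi_pos⟩
  have : Nonempty s := (card_pos.1 (by omega)).to_subtype
  obtain ⟨j, rfl⟩ := hk
  obtain ⟨F, hF⟩ := exists_isFarPairing_tbX h
  have hβ : 0 ≤ tbX s := tbX_nonneg
  have harc (x : s) :
      (((2 * j + 1 : ℕ) : ℝ) + 1) * (π - tbX s) ≤ AddCircle.arc x.1 (F x) := by
    have := hF.two_mul_card_arcPoints_add_two hβ x
    have := hF.add_one_mul_le_arc hβ (j := j) x (by omega)
    push_cast
    linarith
  obtain ⟨x, hx⟩ := exists_ptTd_eq_tdX (X := s)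
  obtain ⟨y, hy⟩ := exists_dist_eq_ptTd x
  obtain rfl : y = F x := (hF x y).1 (by rw [hy, hx]; exact h)
  rw [← hx, ← hy, Subtype.dist_eq, AddCircle.dist_eq_min_arc,
    ← AddCircle.arc_comm (Subtype.coe_injective.ne (hF.apply_ne hβ x))]
  refine le_min (harc x) ?_
  simpa only [hF.apply_apply] using harc (F x)

/-- For odd `k ≥ 1` and a subset `X` of the circle with `2k+2` points satisfying
`t_b(X) < t_d(X)`, one has `t_d(X) ≥ (k+1)(π - t_b(X))`. -/
theorem tdX_ge_of_circle_odd (k : ℕ) (hk : Odd k) (hk1 : 1 ≤ k)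
    (s : Finset (AddCircle (2 * Real.pi))) (hcard : s.card = 2 * k + 2)
    (h : tbX ↥s < tdX ↥s) :
    ((k : ℝ) + 1) * (Real.pi - tbX ↥s) ≤ tdX ↥s :=
  tdX_ge_of_circle_odd_general k hk s hcard h
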